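/- If G is a finitely generated group acting by isometries on a Λ-tree T with 2Λ = Λ, and every element of G fixes a point of T, then G has a global fixed point in T. -/

import Mathlib

/-- A segment from `x` to `y` in a `Λ`-metric space `(T, d)`: a subset isometric to an
interval `[a, b]` of `Λ` with endpoints `x` and `y`. -/
def IsSegment {Λ : Type*} [AddCommGroup Λ] [LinearOrder Λ] [IsOrderedAddMonoid Λ] {T : Type*}
    (d : T → T → Λ) (S : Set T) (x y : T) : Prop :=
  ∃ (a b : Λ) (f : Λ → T), a ≤ b ∧ f a = x ∧ f b = y ∧ S = f '' Set.Icc a b ∧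
    ∀ s ∈ Set.Icc a b, ∀ t ∈ Set.Icc a b, d (f s) (f t) = |s - t|

/-- `(T, d)` is a `Λ`-tree: a `Λ`-metric space in which any two points are joined by a
segment, the intersection of two segments with a common endpoint is a segment, and the
union of two segments meeting exactly in a common endpoint is a segment. -/
def IsLambdaTree {Λ : Type*} [AddCommGroup Λ] [LinearOrder Λ] [IsOrderedAddMonoid Λ] {T : Type*}
    (d : T → T → Λ) : Prop :=
  (∀ x y : T, d x y = 0 ↔ x = y) ∧
  (∀ x y : T, d x y = d y x) ∧
  (∀ x y z : T, d x z ≤ d x y + d y z) ∧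
  (∀ x y : T, ∃ S : Set T, IsSegment d S x y) ∧
  (∀ (S₁ S₂ : Set T) (x y z : T), IsSegment d S₁ x y → IsSegment d S₂ x z →
    ∃ (S : Set T) (w : T), IsSegment d S x w ∧ S₁ ∩ S₂ = S) ∧
  (∀ (S₁ S₂ : Set T) (x y z : T), IsSegment d S₁ x y → IsSegment d S₂ x z →
    S₁ ∩ S₂ = {x} → IsSegment d (S₁ ∪ S₂) y z)

/-!
Fixed point sets of isometries are subtrees. If `g`, `h` and `gh` all fix points, then the
point of `[p, hp]` (where `ghp = p`) that is fixed by `h` sits at distance `d(p, hp)/2` from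
`p`, namely it is the projection of `p` onto `Fix h`; `g` carries it to the analogous point of
`[p, gp]` fixed by `g`, which forces `Fix g ∩ Fix h ≠ ∅`. Subtrees of a `Λ`-tree have the Helly
property, because three pairwise intersecting subtrees all contain the median of a tripod; so the
fixed point sets of a finite generating set have a common point, which `G` fixes.
-/

open Set Function

section LambdaTree

variable {Λ : Type*} [AddCommGroup Λ] [LinearOrder Λ] [IsOrderedAddMonoid Λ] {T : Type*}
  {d : T → T → Λ}

namespace IsSegment

variable {S : Set T} {x y p q : T}

theorem dist_eq_sub_of_le {a b s t : Λ} {f : Λ → T}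
    (hf : ∀ s ∈ Icc a b, ∀ t ∈ Icc a b, d (f s) (f t) = |s - t|)
    (hs : s ∈ Icc a b) (ht : t ∈ Icc a b) (hst : s ≤ t) : d (f s) (f t) = t - s := by
  rw [hf s hs t ht, abs_of_nonpos (sub_nonpos.mpr hst), neg_sub]

theorem left_mem (h : IsSegment d S x y) : x ∈ S := by
  obtain ⟨a, b, f, hab, rfl, -, rfl, -⟩ := h
  exact mem_image_of_mem f (left_mem_Icc.2 hab)

theorem right_mem (h : IsSegment d S x y) : y ∈ S := by
  obtain ⟨a, b, f, hab, -, rfl, rfl, -⟩ := h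
  exact mem_image_of_mem f (right_mem_Icc.2 hab)

theorem dist_add_dist (h : IsSegment d S x y) (hp : p ∈ S) : d x p + d p y = d x y := by
  obtain ⟨a, b, f, hab, rfl, rfl, rfl, hf⟩ := h
  obtain ⟨s, hs, rfl⟩ := hp
  have ha := left_mem_Icc.2 hab
  have hb := right_mem_Icc.2 hab
  rw [dist_eq_sub_of_le hf ha hs hs.1, dist_eq_sub_of_le hf hs hb hs.2,
    dist_eq_sub_of_le hf ha hb hab, sub_add_sub_cancel']

theorem eq_of_dist_eq (h : IsSegment d S x y) (hp : p ∈ S) (hq : q ∈ S) (hpq : d x p = d x q) :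
    p = q := by
  obtain ⟨a, b, f, hab, rfl, -, rfl, hf⟩ := h
  obtain ⟨s, hs, rfl⟩ := hp
  obtain ⟨t, ht, rfl⟩ := hq
  have ha := left_mem_Icc.2 hab
  rw [dist_eq_sub_of_le hf ha hs hs.1, dist_eq_sub_of_le hf ha ht ht.1, sub_left_inj] at hpq
  rw [hpq]

theorem exists_dist_eq (h : IsSegment d S x y) {t : Λ} (ht₀ : 0 ≤ t) (ht : t ≤ d x y) :
    ∃ p ∈ S, d x p = t := by
  obtain ⟨a, b, f, hab, rfl, rfl, rfl, hf⟩ := h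
  have ha := left_mem_Icc.2 hab
  rw [dist_eq_sub_of_le hf ha (right_mem_Icc.2 hab) hab] at ht
  have hat : a + t ∈ Icc a b := ⟨le_add_of_nonneg_right ht₀, le_sub_iff_add_le'.1 ht⟩
  exact ⟨f (a + t), mem_image_of_mem f hat, by
    rw [dist_eq_sub_of_le hf ha hat hat.1, add_sub_cancel_left]⟩

protected theorem symm (h : IsSegment d S x y) : IsSegment d S y x := by
  obtain ⟨a, b, f, hab, rfl, rfl, rfl, hf⟩ := h
  have hrefl : (fun u => a + b - u) '' Icc a b = Icc a b := by
    rw [image_const_sub_Icc, add_sub_cancel_right, add_sub_cancel_left]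
  have hmem {s : Λ} (hs : s ∈ Icc a b) : a + b - s ∈ Icc a b :=
    hrefl ▸ mem_image_of_mem _ hs
  refine ⟨a, b, fun u => f (a + b - u), hab, by simp, by simp, ?_, fun s hs t ht => ?_⟩
  · change f '' Icc a b = (f ∘ fun u => a + b - u) '' Icc a b
    rw [image_comp, hrefl]
  · rw [hf _ (hmem hs) _ (hmem ht), sub_sub_sub_cancel_left, abs_sub_comm]

theorem image {T' : Type*} {d' : T' → T' → Λ} {φ : T → T'}
    (hφ : ∀ u v, d' (φ u) (φ v) = d u v) (h : IsSegment d S x y) :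
    IsSegment d' (φ '' S) (φ x) (φ y) := by
  obtain ⟨a, b, f, hab, rfl, rfl, rfl, hf⟩ := h
  exact ⟨a, b, φ ∘ f, hab, rfl, rfl, (image_comp φ f _).symm,
    fun s hs t ht => (hφ _ _).trans (hf s hs t ht)⟩

theorem exists_split (h : IsSegment d S x y) (hp : p ∈ S) :
    ∃ S₁ S₂ : Set T, IsSegment d S₁ x p ∧ IsSegment d S₂ p y ∧ S₁ ∪ S₂ = S ∧ S₁ ∩ S₂ = {p} := by
  obtain ⟨a, b, f, hab, rfl, rfl, rfl, hf⟩ := h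
  obtain ⟨c, hc, rfl⟩ := hp
  have hinj : InjOn f (Icc a b) := fun s hs t ht hst => by
    have hd := hf s hs t ht
    rwa [hst, hf t ht t ht, sub_self, abs_zero, eq_comm, abs_eq_zero, sub_eq_zero] at hd
  have hac : Icc a c ⊆ Icc a b := Icc_subset_Icc_right hc.2
  have hcb : Icc c b ⊆ Icc a b := Icc_subset_Icc_left hc.1
  refine ⟨f '' Icc a c, f '' Icc c b,
    ⟨a, c, f, hc.1, rfl, rfl, rfl, fun s hs t ht => hf s (hac hs) t (hac ht)⟩,
    ⟨c, b, f, hc.2, rfl, rfl, rfl, fun s hs t ht => hf s (hcb hs) t (hcb ht)⟩, ?_, ?_⟩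
  · rw [← image_union, Icc_union_Icc_eq_Icc hc.1 hc.2]
  · rw [← hinj.image_inter hac hcb, Icc_inter_Icc_eq_singleton hc.1 hc.2, image_singleton]

end IsSegment

namespace IsLambdaTree

variable {S₁ S₂ : Set T} {x y : T}

theorem dist_self (ht : IsLambdaTree d) (x : T) : d x x = 0 := (ht.1 x x).2 rfl

theorem dist_comm (ht : IsLambdaTree d) (x y : T) : d x y = d y x := ht.2.1 x y

theorem dist_nonneg (ht : IsLambdaTree d) (x y : T) : 0 ≤ d x y := by
  have h := ht.2.2.1 x y x
  rw [ht.dist_self, ht.dist_comm y x] at h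
  exact nonneg_add_self_iff.1 h

theorem injective_of_dist_eq (ht : IsLambdaTree d) {φ : T → T}
    (hφ : ∀ u v, d (φ u) (φ v) = d u v) : Injective φ := fun u v huv =>
  (ht.1 u v).1 (by rw [← hφ, huv, ht.dist_self])

theorem subset_of_isSegment_subset (ht : IsLambdaTree d) (h₁ : IsSegment d S₁ x y)
    (h₂ : IsSegment d S₂ x y) (h₂₁ : S₂ ⊆ S₁) : S₁ ⊆ S₂ := by
  intro p hp
  have hle : d x p ≤ d x y :=
    h₁.dist_add_dist hp ▸ le_add_of_nonneg_right (ht.dist_nonneg p y)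
  obtain ⟨q, hq, hqp⟩ := h₂.exists_dist_eq (ht.dist_nonneg x p) hle
  rwa [h₁.eq_of_dist_eq hp (h₂₁ hq) hqp.symm]

theorem isSegment_unique (ht : IsLambdaTree d) (h₁ : IsSegment d S₁ x y)
    (h₂ : IsSegment d S₂ x y) : S₁ = S₂ := by
  obtain ⟨S, w, hS, hint⟩ := ht.2.2.2.2.1 S₁ S₂ x y y h₁ h₂
  have hy : y ∈ S := hint ▸ ⟨h₁.right_mem, h₂.right_mem⟩
  have hw : w ∈ S₁ := (hint ▸ hS.right_mem : w ∈ S₁ ∩ S₂).1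
  have hwy : d w y + d y w = 0 := by
    have e := hS.dist_add_dist hy
    rwa [← h₁.dist_add_dist hw, add_assoc, add_eq_left] at e
  obtain rfl : w = y :=
    (ht.1 w y).1 ((add_eq_zero_iff_of_nonneg (ht.dist_nonneg _ _) (ht.dist_nonneg _ _)).1 hwy).1
  have hS₁ : S ⊆ S₁ := hint ▸ inter_subset_left
  have hS₂ : S ⊆ S₂ := hint ▸ inter_subset_right
  exact Subset.antisymm ((ht.subset_of_isSegment_subset h₁ hS hS₁).trans hS₂)
    ((ht.subset_of_isSegment_subset h₂ hS hS₂).trans hS₁)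

/-- The segment `[x, y]`, unique by `isSegment_unique`. -/
noncomputable def seg (ht : IsLambdaTree d) (x y : T) : Set T :=
  (ht.2.2.2.1 x y).choose

theorem isSegment_seg (ht : IsLambdaTree d) (x y : T) : IsSegment d (ht.seg x y) x y :=
  (ht.2.2.2.1 x y).choose_spec

theorem eq_seg (ht : IsLambdaTree d) {S : Set T} (h : IsSegment d S x y) : S = ht.seg x y :=
  ht.isSegment_unique h (ht.isSegment_seg x y)

theorem seg_comm (ht : IsLambdaTree d) (x y : T) : ht.seg x y = ht.seg y x :=
  ht.eq_seg (ht.isSegment_seg x y).symm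

theorem image_seg (ht : IsLambdaTree d) {φ : T → T} (hφ : ∀ u v, d (φ u) (φ v) = d u v)
    (x y : T) : φ '' ht.seg x y = ht.seg (φ x) (φ y) :=
  ht.eq_seg ((ht.isSegment_seg x y).image hφ)

theorem exists_mem_seg_inter (ht : IsLambdaTree d) (a b c : T) :
    ∃ m, m ∈ ht.seg a b ∧ m ∈ ht.seg a c ∧ m ∈ ht.seg b c := by
  obtain ⟨S, w, hS, hint⟩ :=
    ht.2.2.2.2.1 _ _ a b c (ht.isSegment_seg a b) (ht.isSegment_seg a c)
  obtain ⟨hwb, hwc⟩ : w ∈ ht.seg a b ∩ ht.seg a c := hint ▸ hS.right_mem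
  obtain ⟨P₁, P₂, hP₁, hP₂, hPu, hPi⟩ := (ht.isSegment_seg a b).exists_split hwb
  obtain ⟨Q₁, Q₂, -, hQ₂, hQu, -⟩ := (ht.isSegment_seg a c).exists_split hwc
  have hSP₁ : S = P₁ := ht.isSegment_unique hS hP₁
  have hPQ : P₂ ∩ Q₂ = {w} := by
    refine eq_singleton_iff_unique_mem.2 ⟨⟨hP₂.left_mem, hQ₂.left_mem⟩, ?_⟩
    rintro z ⟨hzP, hzQ⟩
    have hzS : z ∈ S := hint ▸ ⟨hPu ▸ mem_union_right _ hzP, hQu ▸ mem_union_right _ hzQ⟩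
    rw [← mem_singleton_iff, ← hPi]
    exact ⟨hSP₁ ▸ hzS, hzP⟩
  have hbc := ht.eq_seg (ht.2.2.2.2.2 P₂ Q₂ w b c hP₂ hQ₂ hPQ)
  exact ⟨w, hwb, hwc, hbc ▸ mem_union_left _ hP₂.left_mem⟩

/-- Convex subsets are the subtrees of `T`. -/
def IsConvex (ht : IsLambdaTree d) (X : Set T) : Prop :=
  ∀ ⦃x⦄, x ∈ X → ∀ ⦃y⦄, y ∈ X → ht.seg x y ⊆ X

variable {ht : IsLambdaTree d} {X Y Z : Set T}

theorem IsConvex.inter (hX : ht.IsConvex X) (hY : ht.IsConvex Y) : ht.IsConvex (X ∩ Y) :=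
  fun _ hx _ hy _ hz => ⟨hX hx.1 hy.1 hz, hY hx.2 hy.2 hz⟩

theorem IsConvex.inter_inter_nonempty (hX : ht.IsConvex X) (hY : ht.IsConvex Y)
    (hZ : ht.IsConvex Z) (hXY : (X ∩ Y).Nonempty) (hXZ : (X ∩ Z).Nonempty)
    (hYZ : (Y ∩ Z).Nonempty) : (X ∩ Y ∩ Z).Nonempty := by
  obtain ⟨u, huX, huY⟩ := hXY
  obtain ⟨v, hvX, hvZ⟩ := hXZ
  obtain ⟨w, hwY, hwZ⟩ := hYZ
  obtain ⟨m, huv, huw, hvw⟩ := ht.exists_mem_seg_inter u v w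
  exact ⟨m, ⟨hX huX hvX huv, hY huY hwY huw⟩, hZ hvZ hwZ hvw⟩

theorem iInter_nonempty_of_pairwise_inter_nonempty [Nonempty T] {ι : Type*} (s : Finset ι)
    {X : ι → Set T} (hX : ∀ i ∈ s, ht.IsConvex (X i))
    (hXX : ∀ i ∈ s, ∀ j ∈ s, (X i ∩ X j).Nonempty) : (⋂ i ∈ s, X i).Nonempty := by
  classical
  induction s using Finset.induction_on generalizing X with
  | empty => simp
  | insert i s _ ih =>
    rcases s.eq_empty_or_nonempty with rfl | ⟨j, hj⟩
    · simpa using hXX i (Finset.mem_insert_self i ∅) i (Finset.mem_insert_self i ∅)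
    have hi := Finset.mem_insert_self i s
    have hXi := hX i hi
    have hs {k} (hk : k ∈ s) : k ∈ insert i s := Finset.mem_insert_of_mem hk
    have hpair : ∀ k ∈ s, ∀ l ∈ s, (X i ∩ X k ∩ (X i ∩ X l)).Nonempty := fun k hk l hl => by
      obtain ⟨y, ⟨hyi, hyk⟩, hyl⟩ := hXi.inter_inter_nonempty (hX k (hs hk)) (hX l (hs hl))
        (hXX i hi k (hs hk)) (hXX i hi l (hs hl)) (hXX k (hs hk) l (hs hl))
      exact ⟨y, ⟨hyi, hyk⟩, hyi, hyl⟩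
    obtain ⟨x, hx⟩ := ih (X := fun k => X i ∩ X k) (fun k hk => hXi.inter (hX k (hs hk))) hpair
    rw [mem_iInter₂] at hx
    exact ⟨x, by
      rw [Finset.set_biInter_insert]
      exact ⟨(hx j hj).1, mem_iInter₂.2 fun k hk => (hx k hk).2⟩⟩

variable {φ ψ : T → T}

theorem isConvex_fixedPoints (ht : IsLambdaTree d) (hφ : ∀ u v, d (φ u) (φ v) = d u v) :
    ht.IsConvex (fixedPoints φ) := by
  intro x hx y hy p hp
  have hφp : φ p ∈ ht.seg x y := by
    rw [← IsFixedPt.eq hx, ← IsFixedPt.eq hy, ← ht.image_seg hφ]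
    exact mem_image_of_mem φ hp
  refine (ht.isSegment_seg x y).eq_of_dist_eq hφp hp ?_
  rw [← hφ x p, IsFixedPt.eq hx]

/-- The witness is the median of `q`, `p` and `φ p`, i.e. the projection of `p` onto the fixed
point set. -/
theorem exists_isFixedPt_mem_seg (ht : IsLambdaTree d) (hφ : ∀ u v, d (φ u) (φ v) = d u v)
    {q : T} (hq : IsFixedPt φ q) (p : T) :
    ∃ m, IsFixedPt φ m ∧ m ∈ ht.seg p (φ p) ∧ d p m = d (φ p) m := by
  obtain ⟨m, hqp, hqφp, hpφp⟩ := ht.exists_mem_seg_inter q p (φ p)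
  have hφm : φ m ∈ ht.seg q (φ p) := by
    rw [← hq.eq, ← ht.image_seg hφ]
    exact mem_image_of_mem φ hqp
  have hfix : IsFixedPt φ m :=
    (ht.isSegment_seg q (φ p)).eq_of_dist_eq hφm hqφp (by rw [← hφ q m, hq.eq])
  have e₁ := (ht.isSegment_seg q p).dist_add_dist hqp
  have e₂ := (ht.isSegment_seg q (φ p)).dist_add_dist hqφp
  rw [← hq.eq, hφ, hq.eq, ← e₁, add_right_inj] at e₂
  exact ⟨m, hfix, hpφp, by rw [ht.dist_comm p, ht.dist_comm (φ p), e₂]⟩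

/-- Serre's lemma. -/
theorem exists_isFixedPt_of_isFixedPt_comp (ht : IsLambdaTree d)
    (hφ : ∀ u v, d (φ u) (φ v) = d u v) (hψ : ∀ u v, d (ψ u) (ψ v) = d u v)
    (hφ₀ : ∃ q, IsFixedPt φ q) (hψ₀ : ∃ r, IsFixedPt ψ r) (hφψ₀ : ∃ p, IsFixedPt (φ ∘ ψ) p) :
    ∃ m, IsFixedPt φ m ∧ IsFixedPt ψ m := by
  obtain ⟨q, hq⟩ := hφ₀
  obtain ⟨r, hr⟩ := hψ₀
  obtain ⟨p, hp'⟩ := hφψ₀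
  change φ (ψ p) = p at hp'
  obtain ⟨m, hψm, hm, hmd⟩ := ht.exists_isFixedPt_mem_seg hψ hr p
  obtain ⟨m', hφm', hm', hm'd⟩ := ht.exists_isFixedPt_mem_seg hφ hq p
  have hpψp : d p m + d p m = d p (ψ p) := by
    rw [← (ht.isSegment_seg p (ψ p)).dist_add_dist hm, ht.dist_comm m, ← hmd]
  have hpφp : d p m' + d p m' = d p (φ p) := by
    rw [← (ht.isSegment_seg p (φ p)).dist_add_dist hm', ht.dist_comm m', ← hm'd]
  have hφψ : d p (φ p) = d p (ψ p) :=
    calc d p (φ p) = d (φ (ψ p)) (φ p) := by rw [hp']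
      _ = d p (ψ p) := by rw [hφ, ht.dist_comm]
  have hdm : d p m = d p m' := by
    refine nsmul_right_injective two_ne_zero ?_
    simp only [two_nsmul, hpψp, hpφp, hφψ]
  have hφm : φ m ∈ ht.seg p (φ p) := by
    have hseg : φ '' ht.seg (ψ p) p = ht.seg p (φ p) := by rw [ht.image_seg hφ, hp']
    rw [← hseg, ht.seg_comm]
    exact mem_image_of_mem φ hm
  have hφmm' : φ m = m' :=
    (ht.isSegment_seg p (φ p)).eq_of_dist_eq hφm hm' <|
      calc d p (φ m) = d (φ (ψ p)) (φ m) := by rw [hp']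
        _ = d p m' := by rw [hφ, ← hmd, hdm]
  have hmm' : m = m' := ht.injective_of_dist_eq hφ (hφmm'.trans hφm'.symm)
  exact ⟨m, hmm' ▸ hφmm', hψm⟩

end IsLambdaTree

end LambdaTree

theorem stmt_14_general {Λ : Type*} [AddCommGroup Λ] [LinearOrder Λ] [IsOrderedAddMonoid Λ] {T : Type*}
    (G : Type*) [Group G] [Group.FG G] [MulAction G T]
    (d : T → T → Λ) (htree : IsLambdaTree d)
    (hiso : ∀ (g : G) (x y : T), d (g • x) (g • y) = d x y)
    (hell : ∀ g : G, ∃ x : T, g • x = x) :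
    ∃ x : T, ∀ g : G, g • x = x := by
  obtain ⟨S, hS⟩ := (Group.FG.out : (⊤ : Subgroup G).FG)
  have : Nonempty T := ⟨(hell 1).choose⟩
  obtain ⟨x, hx⟩ := htree.iInter_nonempty_of_pairwise_inter_nonempty S
    (X := fun g => fixedPoints (g • · : T → T))
    (fun g _ => htree.isConvex_fixedPoints (hiso g))
    (fun g _ h _ => htree.exists_isFixedPt_of_isFixedPt_comp (hiso g) (hiso h)
      (hell g) (hell h) (by simpa only [IsFixedPt, comp_apply, mul_smul] using hell (g * h)))
  have hstab : Subgroup.closure (S : Set G) ≤ MulAction.stabilizer G x :=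
    (Subgroup.closure_le _).2 fun g hg => mem_iInter₂.1 hx g hg
  exact ⟨x, fun g => hstab (hS ▸ Subgroup.mem_top g)⟩

/-- If a finitely generated group `G` acts by isometries on a `Λ`-tree with
`2Λ = Λ` and every element of `G` has a fixed point, then `G` has a global fixed
point. -/
theorem stmt_14 {Λ : Type*} [AddCommGroup Λ] [LinearOrder Λ] [IsOrderedAddMonoid Λ] {T : Type*}
    (G : Type*) [Group G] [Group.FG G] [MulAction G T]
    (d : T → T → Λ) (htree : IsLambdaTree d)
    (h2 : ∀ lam : Λ, ∃ mu : Λ, mu + mu = lam)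
    (hiso : ∀ (g : G) (x y : T), d (g • x) (g • y) = d x y)
    (hell : ∀ g : G, ∃ x : T, g • x = x) :
    ∃ x : T, ∀ g : G, g • x = x :=
  stmt_14_general G d htree hiso hell
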